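/- arXiv:2506.07115 — 7 statements merged into one kernel-verified Lean document; each statement's English description precedes it below -/
import Mathlib

section
/- Let t ≥ 0 and n ≥ 12t + 54 be integers and let G be a triangle-free simple graph on n vertices with e(G) ≥ n²/4 − n/2 − 6t − 11. Then G contains an independent set X with |X| ≥ n/2 − 2 such that the set S = {v ∈ X : d_G(v) < 3n/8} satisfies |S| ≤ 7; consequently X' = X \ S is an independent set of G with |X'| ≥ n/2 − 9 such that d_G(x) + d_G(y) ≥ 3n/4 for any two distinct vertices x, y ∈ X'. -/
open Finset SimpleGraph

section IndepAux

variable {n : ℕ} (G : SimpleGraph (Fin n)) [DecidableRel G.Adj]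


noncomputable def innerEdges (T : Finset (Fin n)) : Finset (Sym2 (Fin n)) := by
  classical exact G.edgeFinset.filter (fun e => ∀ x ∈ e, x ∈ T)

lemma mem_innerEdges {T : Finset (Fin n)} {e : Sym2 (Fin n)} :
    e ∈ innerEdges G T ↔ e ∈ G.edgeFinset ∧ ∀ x ∈ e, x ∈ T := by
  classical simp [innerEdges]

lemma innerEdges_erase_le {T : Finset (Fin n)} {u : Fin n} :
    (innerEdges G T).card ≤ (innerEdges G (T.erase u)).card
      + (G.neighborFinset u ∩ T).card := by
  classical
  have hsub : innerEdges G T ⊆ innerEdges G (T.erase u)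
      ∪ (G.neighborFinset u ∩ T).image (fun w => s(u, w)) := by
    intro e he
    rw [mem_innerEdges] at he
    obtain ⟨heE, hT⟩ := he
    induction e with
    | _ a b =>
      have hadj : G.Adj a b := by rwa [mem_edgeFinset, mem_edgeSet] at heE
      rw [mem_union]
      by_cases hua : u = a
      · right
        refine mem_image.2 ⟨b, ?_, by rw [hua]⟩
        subst hua
        exact mem_inter.2 ⟨(mem_neighborFinset _ _ _).2 hadj, hT b (Sym2.mem_mk_right _ _)⟩
      · by_cases hub : u = b
        · right
          refine mem_image.2 ⟨a, ?_, by rw [hub, Sym2.eq_swap]⟩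
          subst hub
          exact mem_inter.2 ⟨(mem_neighborFinset _ _ _).2 hadj.symm,
            hT a (Sym2.mem_mk_left _ _)⟩
        · left
          rw [mem_innerEdges]
          refine ⟨heE, ?_⟩
          intro x hx
          rcases Sym2.mem_iff.1 hx with rfl | rfl
          · exact Finset.mem_erase.2 ⟨fun h => hua h.symm, hT x hx⟩
          · exact Finset.mem_erase.2 ⟨fun h => hub h.symm, hT x hx⟩
  calc (innerEdges G T).card ≤ _ := card_le_card hsub
    _ ≤ (innerEdges G (T.erase u)).card
        + ((G.neighborFinset u ∩ T).image (fun w => s(u, w))).card := card_union_le _ _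
    _ ≤ _ := by gcongr; exact card_image_le

lemma mantel_subset (hfree : G.CliqueFree 3) (T : Finset (Fin n)) :
    4 * (innerEdges G T).card ≤ T.card ^ 2 := by
  classical
  induction T using Finset.strongInductionOn with
  | _ T ih =>
  by_cases h : ∃ u ∈ T, ∃ w ∈ T, G.Adj u w
  · obtain ⟨u, hu, w, hw, hadj⟩ := h
    have hne : u ≠ w := hadj.ne
    have hwu : w ∈ T.erase u := Finset.mem_erase.2 ⟨fun h => hne h.symm, hw⟩
    have step1 := innerEdges_erase_le G (T := T) (u := u)
    have step2 := innerEdges_erase_le G (T := T.erase u) (u := w)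
    -- disjointness of neighborhoods inside T
    have hdisj : Disjoint (G.neighborFinset u ∩ T) (G.neighborFinset w ∩ T) := by
      rw [Finset.disjoint_left]
      intro z hz1 hz2
      have h1 : G.Adj u z := (mem_neighborFinset _ _ _).1 (mem_inter.1 hz1).1
      have h2 : G.Adj w z := (mem_neighborFinset _ _ _).1 (mem_inter.1 hz2).1
      exact hfree {u, w, z} (is3Clique_triple_iff.2 ⟨hadj, h1, h2⟩)
    have hsum : (G.neighborFinset u ∩ T).card + (G.neighborFinset w ∩ T).card ≤ T.card := by
      rw [← card_union_of_disjoint hdisj]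
      exact card_le_card (union_subset inter_subset_right inter_subset_right)
    have hNw : (G.neighborFinset w ∩ T.erase u).card + 1 ≤ (G.neighborFinset w ∩ T).card := by
      have huNw : u ∈ G.neighborFinset w ∩ T :=
        mem_inter.2 ⟨(mem_neighborFinset _ _ _).2 hadj.symm, hu⟩
      have : G.neighborFinset w ∩ T.erase u = (G.neighborFinset w ∩ T).erase u := by
        ext z; simp [Finset.mem_erase, and_comm, and_left_comm, and_assoc]
      rw [this, card_erase_add_one huNw]
    have hss : (T.erase u).erase w ⊂ T :=
      Finset.ssubset_of_subset_of_ssubset (erase_subset _ _) (Finset.erase_ssubset hu)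
    have ihT := ih _ hss
    have hcard2 : ((T.erase u).erase w).card + 2 = T.card := by
      have h1 := card_erase_add_one hwu
      have h2 := card_erase_add_one hu
      omega
    nlinarith [step1, step2, hsum, hNw, ihT, hcard2]
  · have : innerEdges G T = ∅ := by
      rw [Finset.eq_empty_iff_forall_notMem]
      intro e he
      rw [mem_innerEdges] at he
      obtain ⟨heE, hT⟩ := he
      induction e with
      | _ a b =>
        have hadj : G.Adj a b := by rwa [mem_edgeFinset, mem_edgeSet] at heE
        exact h ⟨a, hT a (Sym2.mem_mk_left _ _), b, hT b (Sym2.mem_mk_right _ _), hadj⟩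
    simp [this]

lemma edges_le_inner_add_degrees (S : Finset (Fin n)) :
    G.edgeFinset.card ≤ (innerEdges G (univ \ S)).card + ∑ v ∈ S, G.degree v := by
  classical
  have hsplit := Finset.card_filter_add_card_filter_not
    (s := G.edgeFinset) (p := fun e => ∀ x ∈ e, x ∈ univ \ S)
  have hsub : G.edgeFinset.filter (fun e => ¬ ∀ x ∈ e, x ∈ univ \ S)
      ⊆ S.biUnion (fun v => G.incidenceFinset v) := by
    intro e he
    rw [mem_filter] at he
    obtain ⟨heE, hne⟩ := he
    push_neg at hne
    obtain ⟨x, hxe, hxS⟩ := hne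
    rw [Finset.mem_sdiff] at hxS
    push_neg at hxS
    have hxS' : x ∈ S := hxS (mem_univ x)
    refine Finset.mem_biUnion.2 ⟨x, hxS', ?_⟩
    rw [mem_incidenceFinset]
    exact ⟨mem_edgeFinset.1 heE, hxe⟩
  have h2 : (G.edgeFinset.filter (fun e => ¬ ∀ x ∈ e, x ∈ univ \ S)).card
      ≤ ∑ v ∈ S, G.degree v := by
    calc _ ≤ (S.biUnion (fun v => G.incidenceFinset v)).card := card_le_card hsub
      _ ≤ ∑ v ∈ S, (G.incidenceFinset v).card := card_biUnion_le
      _ = ∑ v ∈ S, G.degree v := by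
          exact Finset.sum_congr rfl fun v _ => G.card_incidenceFinset_eq_degree v
  have hinner : (G.edgeFinset.filter (fun e => ∀ x ∈ e, x ∈ univ \ S))
      = innerEdges G (univ \ S) := by
    classical
    ext e; rw [mem_innerEdges, mem_filter]
  rw [hinner] at hsplit
  omega

lemma degree_add_degree_le (hfree : G.CliqueFree 3) {u w : Fin n} (h : G.Adj u w) :
    G.degree u + G.degree w ≤ n := by
  classical
  have hdisj : Disjoint (G.neighborFinset u) (G.neighborFinset w) := by
    rw [Finset.disjoint_left]
    intro z hz1 hz2
    exact hfree {u, w, z} (is3Clique_triple_iff.2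
      ⟨h, (mem_neighborFinset _ _ _).1 hz1, (mem_neighborFinset _ _ _).1 hz2⟩)
  calc G.degree u + G.degree w
      = (G.neighborFinset u).card + (G.neighborFinset w).card := by
        rw [card_neighborFinset_eq_degree, card_neighborFinset_eq_degree]
    _ = (G.neighborFinset u ∪ G.neighborFinset w).card := (card_union_of_disjoint hdisj).symm
    _ ≤ (univ : Finset (Fin n)).card := card_le_univ _
    _ = n := by simp

end IndepAux

lemma arith_contra (N E d s : ℝ) (hN : 54 ≤ N) (hE1 : N ^ 2 / 4 - N + 16 ≤ E)
    (hs8 : 8 ≤ s) (hsd : s ≤ d) (hdN : d ≤ N)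
    (hI : E < (N - s) ^ 2 / 4 + s * (3 * N / 8))
    (hII : 2 * E ≤ s * (3 * N / 8) + (d - s) * (N - d) + (N - d) * d) : False := by
  rcases le_or_gt s (N / 2 - 8) with hA | hB
  · nlinarith [mul_nonneg (by linarith : (0:ℝ) ≤ s - 8) (by linarith : (0:ℝ) ≤ N - 2 * s - 16)]
  · rcases le_or_gt d (5 * N / 8) with hd1 | hd2
    · nlinarith [sq_nonneg (d - 5 * N / 8 + 2),
        mul_nonneg (by linarith : (0:ℝ) ≤ s - (N / 2 - 8)) (by linarith : (0:ℝ) ≤ 5 * N / 8 - d),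
        mul_nonneg (by linarith : (0:ℝ) ≤ N - 54) (by linarith : (0:ℝ) ≤ N - 16)]
    · nlinarith [sq_nonneg (16 * d - 11 * N),
        mul_nonneg (by linarith : (0:ℝ) ≤ d - s) (by linarith : (0:ℝ) ≤ d - 5 * N / 8),
        mul_nonneg (by linarith : (0:ℝ) ≤ N - 54) (by linarith : (0:ℝ) ≤ N - 50)]

/-- Let `t ≥ 0`, `n ≥ 12t + 54` and let `G` be a triangle-free graph on `n` vertices with
`e(G) ≥ n²/4 - n/2 - 6t - 11`. Then `G` contains an independent set `X` with
`|X| ≥ n/2 - 2` such that `S = {v ∈ X : d_G(v) < 3n/8}` has `|S| ≤ 7`; moreover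
`X' = X \ S` is an independent set with `|X'| ≥ n/2 - 9` and
`d_G(x) + d_G(y) ≥ 3n/4` for all distinct `x, y ∈ X'`. -/
theorem indep_set_of_dense_triangle_free (t n : ℕ) (hn : 12 * t + 54 ≤ n)
    (G : SimpleGraph (Fin n)) [DecidableRel G.Adj] (hfree : G.CliqueFree 3)
    (he : (n : ℝ) ^ 2 / 4 - (n : ℝ) / 2 - 6 * t - 11 ≤ (G.edgeFinset.card : ℝ)) :
    ∃ X : Finset (Fin n),
      (∀ x ∈ X, ∀ y ∈ X, x ≠ y → ¬ G.Adj x y) ∧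
      (n : ℝ) / 2 - 2 ≤ (X.card : ℝ) ∧
      (X.filter fun v => (G.degree v : ℝ) < 3 * n / 8).card ≤ 7 ∧
      (∀ x ∈ X \ (X.filter fun v => (G.degree v : ℝ) < 3 * n / 8),
        ∀ y ∈ X \ (X.filter fun v => (G.degree v : ℝ) < 3 * n / 8),
          x ≠ y → ¬ G.Adj x y) ∧
      (n : ℝ) / 2 - 9 ≤ (((X \ (X.filter fun v => (G.degree v : ℝ) < 3 * n / 8)).card : ℝ)) ∧
      ∀ x ∈ X \ (X.filter fun v => (G.degree v : ℝ) < 3 * n / 8),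
        ∀ y ∈ X \ (X.filter fun v => (G.degree v : ℝ) < 3 * n / 8),
          x ≠ y → 3 * (n : ℝ) / 4 ≤ (G.degree x : ℝ) + (G.degree y : ℝ) := by
  classical
  haveI : Nonempty (Fin n) := Fin.pos_iff_nonempty.1 (by omega)
  obtain ⟨v₀, hv₀⟩ := G.exists_maximal_degree_vertex
  have hmax : ∀ w, G.degree w ≤ G.degree v₀ := fun w => hv₀ ▸ G.degree_le_maxDegree w
  set X : Finset (Fin n) := G.neighborFinset v₀ with hXdef
  have hXcard : X.card = G.degree v₀ := G.card_neighborFinset_eq_degree v₀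
  have hindep : ∀ x ∈ X, ∀ y ∈ X, x ≠ y → ¬ G.Adj x y := by
    intro x hx y hy _ hadj
    exact hfree {v₀, x, y} (is3Clique_triple_iff.2
      ⟨(mem_neighborFinset _ _ _).1 hx, (mem_neighborFinset _ _ _).1 hy, hadj⟩)
  set S : Finset (Fin n) := X.filter (fun v => (G.degree v : ℝ) < 3 * n / 8) with hSdef
  -- real abbreviations
  set N : ℝ := (n : ℝ) with hNdef
  set E : ℝ := (G.edgeFinset.card : ℝ) with hEdef
  set d : ℝ := (G.degree v₀ : ℝ) with hddef
  set s : ℝ := (S.card : ℝ) with hsdef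
  have hN54 : (54 : ℝ) ≤ N := by
    rw [hNdef]; exact_mod_cast le_trans (by omega) hn
  have ht12 : 12 * (t : ℝ) + 54 ≤ N := by rw [hNdef]; exact_mod_cast hn
  have hE1 : N ^ 2 / 4 - N + 16 ≤ E := by linarith
  have hsumdeg : ∑ w, (G.degree w : ℝ) = 2 * E := by
    have h := congrArg (fun k : ℕ => (k : ℝ)) G.sum_degrees_eq_twice_card_edges
    push_cast at h
    rw [hEdef]; exact_mod_cast h
  have h2E_le : 2 * E ≤ N * d := by
    rw [← hsumdeg]
    calc ∑ w, (G.degree w : ℝ) ≤ (univ : Finset (Fin n)).card • d :=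
          Finset.sum_le_card_nsmul _ _ _ (fun w _ => by
            rw [hddef]; exact_mod_cast hmax w)
      _ = N * d := by rw [nsmul_eq_mul]; congr 1; simp [hNdef]
  have hN0 : (0 : ℝ) < N := by linarith
  have hd_lb : N / 2 - 2 ≤ d := by
    by_contra h'
    push_neg at h'
    have := mul_lt_mul_of_pos_left h' hN0
    nlinarith
  have hd_ub : d ≤ N := by
    rw [hddef, hNdef]
    exact_mod_cast (hXcard ▸ card_le_univ X).trans_eq (by simp)
  have hXd : ∀ w ∈ X, (G.degree w : ℝ) ≤ N - d := by
    intro w hw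
    have := degree_add_degree_le G hfree ((mem_neighborFinset _ _ _).1 hw)
    have hcast : (G.degree v₀ : ℝ) + (G.degree w : ℝ) ≤ N := by
      rw [hNdef]; exact_mod_cast this
    linarith [hcast]
  have hSX : S ⊆ X := filter_subset _ _
  have hcardSX : S.card ≤ X.card := card_le_card hSX
  -- the key bound on |S|
  have hS7 : S.card ≤ 7 := by
    by_contra h8
    push_neg at h8
    have hs8 : (8 : ℝ) ≤ s := by rw [hsdef]; exact_mod_cast h8
    have hSne : S.Nonempty := card_pos.1 (by omega)
    have hsled : s ≤ d := by
      rw [hsdef, hddef]; exact_mod_cast hXcard ▸ hcardSX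
    have hSdeg_lt : ∑ v ∈ S, (G.degree v : ℝ) < s * (3 * N / 8) := by
      calc ∑ v ∈ S, (G.degree v : ℝ) < ∑ _v ∈ S, 3 * N / 8 :=
            Finset.sum_lt_sum_of_nonempty hSne (fun v hv => (mem_filter.1 hv).2)
        _ = s * (3 * N / 8) := by rw [Finset.sum_const, nsmul_eq_mul, hsdef]
    have hsn : S.card ≤ n := le_trans (card_le_univ S) (by simp)
    have hTcast : (((univ \ S : Finset (Fin n)).card : ℕ) : ℝ) = N - s := by
      rw [card_sdiff_of_subset (subset_univ S), card_univ, Fintype.card_fin, Nat.cast_sub hsn,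
        hNdef, hsdef]
    -- inequality (I)
    have hI : E < (N - s) ^ 2 / 4 + s * (3 * N / 8) := by
      have hEdec := edges_le_inner_add_degrees G S
      have hman := mantel_subset G hfree (univ \ S)
      have hinner : ((innerEdges G (univ \ S)).card : ℝ) ≤ (N - s) ^ 2 / 4 := by
        have h4 : (4 : ℝ) * ((innerEdges G (univ \ S)).card : ℝ)
            ≤ (((univ \ S : Finset (Fin n)).card : ℕ) : ℝ) ^ 2 := by exact_mod_cast hman
        rw [hTcast] at h4
        linarith
      have hEdec' : E ≤ ((innerEdges G (univ \ S)).card : ℝ) + ∑ v ∈ S, (G.degree v : ℝ) := by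
        rw [hEdef]; push_cast; exact_mod_cast hEdec
      linarith
    -- inequality (II)
    have hII : 2 * E ≤ s * (3 * N / 8) + (d - s) * (N - d) + (N - d) * d := by
      have hb1 : ∑ w ∈ univ \ X, (G.degree w : ℝ) ≤ (N - d) * d := by
        calc ∑ w ∈ univ \ X, (G.degree w : ℝ) ≤ (univ \ X).card • d :=
              Finset.sum_le_card_nsmul _ _ _ (fun w _ => by
                rw [hddef]; exact_mod_cast hmax w)
          _ = (((univ \ X : Finset (Fin n)).card : ℕ) : ℝ) * d := by rw [nsmul_eq_mul]
          _ = (N - d) * d := by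
              have hdn : G.degree v₀ ≤ n := by
                exact_mod_cast (hXcard ▸ card_le_univ X).trans_eq (by simp)
              rw [card_sdiff_of_subset (subset_univ X), hXcard, card_univ, Fintype.card_fin,
                Nat.cast_sub hdn, hNdef, hddef]
      have hb2 : ∑ w ∈ X \ S, (G.degree w : ℝ) ≤ (d - s) * (N - d) := by
        calc ∑ w ∈ X \ S, (G.degree w : ℝ) ≤ (X \ S).card • (N - d) :=
              Finset.sum_le_card_nsmul _ _ _
                (fun w hw => hXd w (mem_sdiff.1 hw).1)
          _ = (((X \ S).card : ℕ) : ℝ) * (N - d) := by rw [nsmul_eq_mul]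
          _ = (d - s) * (N - d) := by
              rw [card_sdiff_of_subset hSX, Nat.cast_sub hcardSX, hXcard, hddef, hsdef]
      have hsplit2 : ∑ w ∈ X \ S, (G.degree w : ℝ) + ∑ w ∈ S, (G.degree w : ℝ)
          = ∑ w ∈ X, (G.degree w : ℝ) := Finset.sum_sdiff hSX
      have hsplit1 : ∑ w ∈ univ \ X, (G.degree w : ℝ) + ∑ w ∈ X, (G.degree w : ℝ)
          = ∑ w, (G.degree w : ℝ) := Finset.sum_sdiff (subset_univ X)
      linarith [hSdeg_lt]
    exact arith_contra N E d s hN54 hE1 hs8 hsled hd_ub hI hII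
  -- assemble
  refine ⟨X, hindep, ?_, hS7, ?_, ?_, ?_⟩
  · rw [hXcard, ← hddef]; exact hd_lb
  · intro x hx y hy hne
    exact hindep x (mem_sdiff.1 hx).1 y (mem_sdiff.1 hy).1 hne
  · have hc : (X \ S).card = X.card - S.card := card_sdiff_of_subset hSX
    have : ((X \ S).card : ℝ) = (X.card : ℝ) - s := by
      rw [hc, hsdef]; push_cast [Nat.cast_sub hcardSX]; ring
    rw [this]
    have hs7 : s ≤ 7 := by rw [hsdef]; exact_mod_cast hS7
    have : N / 2 - 2 ≤ (X.card : ℝ) := by rw [hXcard]; exact hd_lb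
    linarith
  · intro x hx y hy _
    have hxd : ¬ ((G.degree x : ℝ) < 3 * n / 8) := by
      intro h
      exact (mem_sdiff.1 hx).2 (mem_filter.2 ⟨(mem_sdiff.1 hx).1, h⟩)
    have hyd : ¬ ((G.degree y : ℝ) < 3 * n / 8) := by
      intro h
      exact (mem_sdiff.1 hy).2 (mem_filter.2 ⟨(mem_sdiff.1 hy).1, h⟩)
    push_neg at hxd hyd
    linarith [hxd, hyd]
end

section
/- Let t ≥ 0 and n ≥ 12t + 54 be integers and let G be a triangle-free simple graph on n vertices with e(G) ≥ n²/4 − n/2 − 6t − 11. Then G has at most 7 vertices v with d_G(v) < 3n/8. -/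
/-!
If eight vertices had degree below `3n/8`, they would meet fewer than `3n` edges, while by
Mantel's theorem the triangle-free graph on the remaining `n - 8` vertices has at most
`(n - 8)² / 4` edges. Hence `e(G) < n²/4 - n + 16`, which contradicts the lower bound on `e(G)`
as soon as `n ≥ 12t + 54`.
-/

open Finset

namespace SimpleGraph

variable {V : Type*} [Fintype V] {G : SimpleGraph V} [DecidableRel G.Adj]

theorem CliqueFree.four_mul_card_edgeFinset_le (h : G.CliqueFree 3) :
    4 * #G.edgeFinset ≤ Fintype.card V ^ 2 := by
  have hturan : #G.edgeFinset ≤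
      (Fintype.card V ^ 2 - (Fintype.card V % 2) ^ 2) * (2 - 1) / (2 * 2) +
        (Fintype.card V % 2).choose 2 :=
    CliqueFree.card_edgeFinset_le h
  rw [Nat.choose_eq_zero_of_lt (Nat.mod_lt _ two_pos)] at hturan
  omega

variable [DecidableEq V]

variable (G) in
theorem card_edgeFinset_le_card_edgeFinset_induce_compl_add_sum_degree (s : Finset V) :
    #G.edgeFinset ≤ #(G.induce (↑s)ᶜ).edgeFinset + ∑ v ∈ s, G.degree v := by
  have hcover :
      G.edgeFinset ⊆ G.edgeFinset ∩ (sᶜ).sym2 ∪ s.biUnion (G.incidenceFinset ·) := by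
    intro e he
    by_cases hs : ∃ v ∈ s, v ∈ e
    · obtain ⟨v, hv, hve⟩ := hs
      exact mem_union_right _ <|
        mem_biUnion.2 ⟨v, hv, (G.mem_incidenceFinset ..).2 ⟨mem_edgeFinset.1 he, hve⟩⟩
    · push Not at hs
      exact mem_union_left _ <|
        mem_inter.2 ⟨he, mem_sym2_iff.2 fun v hv => mem_compl.2 fun hvs => hs v hvs hv⟩
  have hinduce : #(G.induce (↑s)ᶜ).edgeFinset = #(G.edgeFinset ∩ (sᶜ).sym2) := by
    rw [← card_map, map_edgeFinset_induce]; simp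
  calc #G.edgeFinset ≤ #(G.edgeFinset ∩ (sᶜ).sym2 ∪ s.biUnion (G.incidenceFinset ·)) :=
        card_le_card hcover
    _ ≤ #(G.edgeFinset ∩ (sᶜ).sym2) + #(s.biUnion (G.incidenceFinset ·)) := card_union_le _ _
    _ ≤ #(G.induce (↑s)ᶜ).edgeFinset + ∑ v ∈ s, G.degree v := by
      rw [hinduce]
      gcongr
      exact card_biUnion_le.trans_eq <|
        sum_congr rfl fun v _ => G.card_incidenceFinset_eq_degree v

theorem CliqueFree.four_mul_card_edgeFinset_le_sq_add_sum_degree (h : G.CliqueFree 3)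
    (s : Finset V) :
    4 * #G.edgeFinset ≤ (Fintype.card V - #s) ^ 2 + 4 * ∑ v ∈ s, G.degree v := by
  have hinduce :=
    ((cliqueFree_induce_iff G (↑s)ᶜ 3).2 h.cliqueFreeOn).four_mul_card_edgeFinset_le
  rw [Fintype.card_compl_set] at hinduce
  simp only [Finset.coe_sort_coe, Fintype.card_coe] at hinduce
  have := G.card_edgeFinset_le_card_edgeFinset_induce_compl_add_sum_degree s
  omega

end SimpleGraph

open SimpleGraph

/-- Let `t ≥ 0`, `n ≥ 12t + 54` and let `G` be a triangle-free graph on `n` vertices with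
`e(G) ≥ n²/4 - n/2 - 6t - 11`. Then `G` has at most `7` vertices `v` with
`d_G(v) < 3n/8`. -/
theorem few_low_degree_vertices (t n : ℕ) (hn : 12 * t + 54 ≤ n)
    (G : SimpleGraph (Fin n)) [DecidableRel G.Adj] (hfree : G.CliqueFree 3)
    (he : (n : ℝ) ^ 2 / 4 - (n : ℝ) / 2 - 6 * t - 11 ≤ (G.edgeFinset.card : ℝ)) :
    (Finset.univ.filter fun v : Fin n => (G.degree v : ℝ) < 3 * n / 8).card ≤ 7 := by
  by_contra! hmany
  obtain ⟨S, hSlow, hS⟩ := exists_subset_card_eq (show 8 ≤ _ from hmany)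
  have hsplit := hfree.four_mul_card_edgeFinset_le_sq_add_sum_degree S
  rw [Fintype.card_fin, hS] at hsplit
  have hsplitR :
      4 * (#G.edgeFinset : ℝ) ≤ ((n : ℝ) - 8) ^ 2 + 4 * ∑ v ∈ S, (G.degree v : ℝ) := by
    have h8 : 8 ≤ n := by omega
    exact_mod_cast hsplit
  have hdeg : ∑ v ∈ S, (G.degree v : ℝ) < 3 * n := by
    calc ∑ v ∈ S, (G.degree v : ℝ) < ∑ _v ∈ S, 3 * (n : ℝ) / 8 :=
          sum_lt_sum_of_nonempty (card_pos.1 (by omega)) fun v hv => (mem_filter.1 (hSlow hv)).2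
      _ = 3 * n := by rw [sum_const, hS]; ring
  have hnR : 12 * (t : ℝ) + 54 ≤ n := by exact_mod_cast hn
  nlinarith
end

section
/- Let t ≥ 0 and n ≥ 12t + 54 be integers and let G be a triangle-free simple graph on n vertices with e(G) ≥ n²/4 − n/2 − 6t − 11. Then the maximum degree of G satisfies Δ(G) ≥ n/2 − 2, and G contains an independent set of size at least n/2 − 2 (namely the neighborhood of any vertex of maximum degree). -/
open Finset

namespace SimpleGraph

variable {V : Type*} [Fintype V] (G : SimpleGraph V) [DecidableRel G.Adj]

theorem two_mul_card_edgeFinset_le_card_mul_maxDegree :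
    2 * #G.edgeFinset ≤ Fintype.card V * G.maxDegree := by
  rw [← sum_degrees_eq_twice_card_edges, ← smul_eq_mul, ← Finset.card_univ]
  exact Finset.sum_le_card_nsmul _ _ _ fun v _ ↦ G.degree_le_maxDegree v

/-- Averaging the degrees: `Δ ≥ 2e/n ≥ n/2 - 1 - 2c/n`, and the deficit `2c/n` is at most `1`. -/
theorem half_sub_two_le_maxDegree_of_le_card_edgeFinset (c : ℝ) (hc : 2 * c ≤ Fintype.card V)
    (he : (Fintype.card V : ℝ) ^ 2 / 4 - Fintype.card V / 2 - c ≤ #G.edgeFinset) :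
    (Fintype.card V : ℝ) / 2 - 2 ≤ G.maxDegree := by
  have hdeg : 2 * (#G.edgeFinset : ℝ) ≤ Fintype.card V * G.maxDegree := by
    exact_mod_cast G.two_mul_card_edgeFinset_le_card_mul_maxDegree
  rcases (Nat.cast_nonneg (Fintype.card V) : (0 : ℝ) ≤ Fintype.card V).eq_or_lt with hn | hn
  · rw [← hn]
    linarith [(Nat.cast_nonneg G.maxDegree : (0 : ℝ) ≤ _)]
  · refine le_of_mul_le_mul_left ?_ hn
    nlinarith

end SimpleGraph

open SimpleGraph in
/-- Let `t ≥ 0`, `n ≥ 12t + 54` and let `G` be a triangle-free graph on `n` vertices with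
`e(G) ≥ n²/4 - n/2 - 6t - 11`. Then `Δ(G) ≥ n/2 - 2`, and the neighborhood of any
vertex of maximum degree is an independent set of size at least `n/2 - 2`. -/
theorem max_degree_and_indep_neighborhood (t n : ℕ) (hn : 12 * t + 54 ≤ n)
    (G : SimpleGraph (Fin n)) [DecidableRel G.Adj] (hfree : G.CliqueFree 3)
    (he : (n : ℝ) ^ 2 / 4 - (n : ℝ) / 2 - 6 * t - 11 ≤ (G.edgeFinset.card : ℝ)) :
    (n : ℝ) / 2 - 2 ≤ (G.maxDegree : ℝ) ∧
    ∀ v : Fin n, G.degree v = G.maxDegree →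
      (∀ x ∈ G.neighborFinset v, ∀ y ∈ G.neighborFinset v, x ≠ y → ¬ G.Adj x y) ∧
      (n : ℝ) / 2 - 2 ≤ ((G.neighborFinset v).card : ℝ) := by
  have hΔ : (n : ℝ) / 2 - 2 ≤ G.maxDegree := by
    have hc : 2 * (6 * t + 11 : ℝ) ≤ n := by
      have : (12 * t + 54 : ℝ) ≤ n := by exact_mod_cast hn
      linarith
    simpa using G.half_sub_two_le_maxDegree_of_le_card_edgeFinset (6 * t + 11)
      (by simpa using hc) (by simp only [Fintype.card_fin]; linarith)
  refine ⟨hΔ, fun v hv ↦ ⟨?_, ?_⟩⟩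
  · simpa [IsIndepSet, Set.Pairwise] using G.isIndepSet_neighborSet_of_triangleFree hfree v
  · rwa [card_neighborFinset_eq_degree, hv]
end

section
/- Let t ≥ 0 and let G be a simple graph containing no t+2 pairwise vertex-disjoint triangles. Let M be a family of t+1 pairwise vertex-disjoint triangles in G, let D be the induced subgraph of G on the vertices not covered by M, and let 𝓜 be a matching in D. If (x,y,z) is a triangle of M such that z is friendly in G with at least two distinct edges of 𝓜, then no vertex of D is friendly in G with the edge xy (i.e., no vertex of D is adjacent in G to both x and y). -/
/-- `G` contains `k` pairwise vertex-disjoint triangles. -/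
def HasIndepTriangles {V : Type*} (G : SimpleGraph V) (k : ℕ) : Prop :=
  ∃ f : Fin k → Fin 3 → V,
    Function.Injective (fun p : Fin k × Fin 3 => f p.1 p.2) ∧
    ∀ i, G.Adj (f i 0) (f i 1) ∧ G.Adj (f i 1) (f i 2) ∧ G.Adj (f i 0) (f i 2)

/-- The vertex `w` is friendly with the edge `e`: it is adjacent to both endpoints. -/
def Friendly {V : Type*} (G : SimpleGraph V) (w : V) (e : Sym2 V) : Prop :=
  ∀ x ∈ e, G.Adj w x

/-- `F` is a matching of the subgraph of `G` induced on `S`: a set of pairwise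
vertex-disjoint `G`-edges with all endpoints in `S`. -/
def IsMatchingOn {V : Type*} (G : SimpleGraph V) (S : Set V) (F : Finset (Sym2 V)) : Prop :=
  (∀ e ∈ F, e ∈ G.edgeSet ∧ ∀ x ∈ e, x ∈ S) ∧
  ((F : Set (Sym2 V)).Pairwise fun e f => ∀ v, v ∈ e → v ∉ f)

/-- Let `G` contain no `t+2` pairwise vertex-disjoint triangles, let `M` (given by `f`) be
a family of `t+1` pairwise vertex-disjoint triangles, `D` the induced subgraph on the
uncovered vertices and `F` a matching in `D`. If `(x,y,z)` is a triangle of `M` with `z`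
friendly with two distinct edges of `F`, then no vertex of `D` is friendly with `xy`. -/
theorem no_friendly_vertex_for_A_edge {V : Type*} [Fintype V] [DecidableEq V] (t : ℕ)
    (G : SimpleGraph V) (hG : ¬ HasIndepTriangles G (t + 2))
    (f : Fin (t + 1) → Fin 3 → V)
    (hinj : Function.Injective fun p : Fin (t + 1) × Fin 3 => f p.1 p.2)
    (htri : ∀ i, G.Adj (f i 0) (f i 1) ∧ G.Adj (f i 1) (f i 2) ∧ G.Adj (f i 0) (f i 2))
    (Dset : Set V) (hDset : Dset = {x | ∀ i j, f i j ≠ x})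
    (F : Finset (Sym2 V)) (hF : IsMatchingOn G Dset F)
    (x y z : V) (i : Fin (t + 1)) (σ : Equiv.Perm (Fin 3))
    (hx : x = f i (σ 0)) (hy : y = f i (σ 1)) (hz : z = f i (σ 2))
    (hfr : ∃ e₁ ∈ F, ∃ e₂ ∈ F, e₁ ≠ e₂ ∧ Friendly G z e₁ ∧ Friendly G z e₂) :
    ∀ w ∈ Dset, ¬ (G.Adj w x ∧ G.Adj w y) := by
  subst hx hy hz
  intro w hw ⟨hwx, hwy⟩
  have hfD : ∀ (k : Fin (t+1)) (j : Fin 3), ∀ v ∈ Dset, f k j ≠ v := by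
    intro k j v hv
    rw [hDset] at hv
    exact hv k j
  have hadjf : ∀ (k : Fin (t+1)) (j j' : Fin 3), j ≠ j' → G.Adj (f k j) (f k j') := by
    intro k j j' hne
    obtain ⟨h1, h2, h3⟩ := htri k
    fin_cases j <;> fin_cases j' <;>
      first
        | exact absurd rfl hne
        | exact h1 | exact h1.symm | exact h2 | exact h2.symm
        | exact h3 | exact h3.symm
  have hfi : ∀ (k k' : Fin (t+1)) (j j' : Fin 3), f k j = f k' j' → k = k' ∧ j = j' := by
    intro k k' j j' hh
    have := hinj (a₁ := (k, j)) (a₂ := (k', j')) hh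
    exact ⟨congrArg Prod.fst this, congrArg Prod.snd this⟩
  have hσ : ∀ j j' : Fin 3, σ j = σ j' → j = j' := fun j j' h => σ.injective h
  obtain ⟨e₁, he₁F, e₂, he₂F, hne, hz1, hz2⟩ := hfr
  have hdisj := hF.2 he₁F he₂F hne
  have key : ∃ e ∈ F, w ∉ e ∧ Friendly G (f i (σ 2)) e := by
    by_cases hw1 : w ∈ e₁
    · exact ⟨e₂, he₂F, hdisj w hw1, hz2⟩
    · exact ⟨e₁, he₁F, hw1, hz1⟩
  clear hdisj hz1 hz2 hne he₁F he₂F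
  obtain ⟨e, heF, hwe, hzfr⟩ := key
  obtain ⟨⟨a, b⟩, rfl⟩ := Quot.exists_rep e
  have hmema : a ∈ Quot.mk (Sym2.Rel V) (a, b) := Sym2.mem_mk_left a b
  have hmemb : b ∈ Quot.mk (Sym2.Rel V) (a, b) := Sym2.mem_mk_right a b
  have hab : G.Adj a b := (hF.1 _ heF).1
  have haD : a ∈ Dset := (hF.1 _ heF).2 a hmema
  have hbD : b ∈ Dset := (hF.1 _ heF).2 b hmemb
  have hza : G.Adj (f i (σ 2)) a := hzfr a hmema
  have hzb : G.Adj (f i (σ 2)) b := hzfr b hmemb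
  have hwa : w ≠ a := fun h => hwe (h ▸ hmema)
  have hwb : w ≠ b := fun h => hwe (h ▸ hmemb)
  clear hzfr hwe heF hF hDset hinj hmema hmemb
  apply hG
  refine ⟨fun k j => if hk : (k : ℕ) < t + 1 then
      (if (⟨(k : ℕ), hk⟩ : Fin (t+1)) = i then ![f i (σ 0), f i (σ 1), w] j
        else f ⟨(k : ℕ), hk⟩ j)
    else ![f i (σ 2), a, b] j, ?_, ?_⟩
  · rintro ⟨p1, p2⟩ ⟨q1, q2⟩ h
    simp only at h
    by_cases hp : (p1 : ℕ) < t + 1 <;> by_cases hq : (q1 : ℕ) < t + 1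
    · rw [dif_pos hp, dif_pos hq] at h
      by_cases hpi : (⟨(p1 : ℕ), hp⟩ : Fin (t+1)) = i <;>
        by_cases hqi : (⟨(q1 : ℕ), hq⟩ : Fin (t+1)) = i
      · rw [if_pos hpi, if_pos hqi] at h
        have hp1q1 : p1 = q1 := by
          have e1 := congrArg Fin.val hpi
          have e2 := congrArg Fin.val hqi
          simp only at e1 e2
          exact Fin.ext (by omega)
        have hp2q2 : p2 = q2 := by
          fin_cases p2 <;> fin_cases q2 <;> simp at h ⊢ <;>
            first
              | rfl
              | exact absurd (hσ _ _ (hfi _ _ _ _ h).2) (by decide)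
              | exact absurd h (hfD _ _ _ hw)
              | exact absurd h.symm (hfD _ _ _ hw)
        exact Prod.ext hp1q1 hp2q2
      · rw [if_pos hpi, if_neg hqi] at h
        exfalso
        fin_cases p2 <;> simp at h <;>
          first
            | exact hqi (hfi _ _ _ _ h).1.symm
            | exact absurd h.symm (hfD _ _ _ hw)
      · rw [if_neg hpi, if_pos hqi] at h
        exfalso
        fin_cases q2 <;> simp at h <;>
          first
            | exact hpi (hfi _ _ _ _ h).1
            | exact absurd h (hfD _ _ _ hw)
      · rw [if_neg hpi, if_neg hqi] at h
        obtain ⟨h1, h2⟩ := hfi _ _ _ _ h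
        have hp1q1 : p1 = q1 := by
          have e1 := congrArg Fin.val h1
          simp only at e1
          exact Fin.ext e1
        exact Prod.ext hp1q1 h2
    · rw [dif_pos hp, dif_neg hq] at h
      exfalso
      by_cases hpi : (⟨(p1 : ℕ), hp⟩ : Fin (t+1)) = i
      · rw [if_pos hpi] at h
        fin_cases p2 <;> fin_cases q2 <;> simp at h <;>
          first
            | exact absurd (hσ _ _ (hfi _ _ _ _ h).2) (by decide)
            | exact absurd h (hfD _ _ _ haD)
            | exact absurd h (hfD _ _ _ hbD)
            | exact absurd h.symm (hfD _ _ _ hw)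
            | exact hwa h
            | exact hwb h
      · rw [if_neg hpi] at h
        fin_cases q2 <;> simp at h <;>
          first
            | exact hpi (hfi _ _ _ _ h).1
            | exact absurd h (hfD _ _ _ haD)
            | exact absurd h (hfD _ _ _ hbD)
    · rw [dif_neg hp, dif_pos hq] at h
      exfalso
      by_cases hqi : (⟨(q1 : ℕ), hq⟩ : Fin (t+1)) = i
      · rw [if_pos hqi] at h
        fin_cases p2 <;> fin_cases q2 <;> simp at h <;>
          first
            | exact absurd (hσ _ _ (hfi _ _ _ _ h).2) (by decide)
            | exact absurd h.symm (hfD _ _ _ haD)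
            | exact absurd h.symm (hfD _ _ _ hbD)
            | exact absurd h (hfD _ _ _ hw)
            | exact hwa h.symm
            | exact hwb h.symm
      · rw [if_neg hqi] at h
        fin_cases p2 <;> simp at h <;>
          first
            | exact hqi (hfi _ _ _ _ h.symm).1
            | exact absurd h.symm (hfD _ _ _ haD)
            | exact absurd h.symm (hfD _ _ _ hbD)
    · rw [dif_neg hp, dif_neg hq] at h
      have hp1q1 : p1 = q1 := by
        have := p1.isLt
        have := q1.isLt
        exact Fin.ext (by omega)
      have hp2q2 : p2 = q2 := by
        fin_cases p2 <;> fin_cases q2 <;> simp at h ⊢ <;>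
          first
            | rfl
            | exact absurd h (G.ne_of_adj hza)
            | exact absurd h.symm (G.ne_of_adj hza)
            | exact absurd h (G.ne_of_adj hzb)
            | exact absurd h.symm (G.ne_of_adj hzb)
            | exact absurd h (G.ne_of_adj hab)
            | exact absurd h.symm (G.ne_of_adj hab)
      exact Prod.ext hp1q1 hp2q2
  · intro k
    by_cases hk : (k : ℕ) < t + 1
    · simp only [dif_pos hk]
      by_cases hki : (⟨(k : ℕ), hk⟩ : Fin (t+1)) = i
      · simp only [if_pos hki]
        refine ⟨?_, ?_, ?_⟩
        · simpa using hadjf i (σ 0) (σ 1) (fun hc => absurd (hσ _ _ hc) (by decide))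
        · simpa using hwy.symm
        · simpa using hwx.symm
      · simp only [if_neg hki]
        exact htri _
    · simp only [dif_neg hk]
      exact ⟨by simpa using hza, by simpa using hab, by simpa using hzb⟩
end

section
/- Let t ≥ 0 and let G be a simple graph on n vertices containing no t+2 pairwise vertex-disjoint triangles. Let M be a family of t+1 pairwise vertex-disjoint triangles in G, let D be the induced subgraph of G on the vertices not covered by M (so |V(D)| = n − 3(t+1)), let 𝓜 be a matching in D, and let A be the set of triangles of M that contain a vertex friendly in G with at least two distinct edges of 𝓜, with a = |A|. Then the number of edges of G with one endpoint in V(A) and the other in V(D) is at most 2a(n − 3(t+1)). -/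
/-!
Let `x` be a vertex of a triangle `xyz` of `M` that is friendly with two distinct edges of the
matching. Since the matching edges are disjoint, for any `d ∈ V(D)` one of them, say `ab`,
avoids `d`. If `d` were adjacent to all of `x, y, z`, then replacing `xyz` by the disjoint
triangles `xab` and `yzd` would give `t + 2` disjoint triangles. So every `d ∈ V(D)` has at most
two neighbours in each triangle of `A`, and there are at most `2 a |V(D)|` edges between `V(A)`
and `V(D)`.
-/

open Function Finset

section DisjointFamilies

variable {ι κ α : Type*}

lemma injective_uncurry_iff {f : ι → κ → α} :
    Injective (uncurry f) ↔
      (∀ i, Injective (f i)) ∧ ∀ i i', i ≠ i' → ∀ j j', f i j ≠ f i' j' := by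
  refine ⟨fun h => ⟨fun i j j' hj => (Prod.ext_iff.1 (@h (i, j) (i, j') hj)).2,
    fun i i' hi j j' hj => hi (Prod.ext_iff.1 (@h (i, j) (i', j') hj)).1⟩, ?_⟩
  rintro ⟨hinj, hdisj⟩ ⟨i, j⟩ ⟨i', j'⟩ h
  by_cases hi : i = i'
  · subst hi
    exact congrArg _ (hinj i h)
  · exact absurd h (hdisj i i' hi j j')

lemma injective_uncurry_update [DecidableEq ι] {f : ι → κ → α}
    (hf : Injective (uncurry f)) (i : ι) {T : κ → α} (hT : Injective T)
    (hTf : ∀ i' ≠ i, ∀ j j', f i' j ≠ T j') :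
    Injective (uncurry (update f i T)) := by
  obtain ⟨hinj, hdisj⟩ := injective_uncurry_iff.1 hf
  refine injective_uncurry_iff.2 ⟨fun i' => ?_, fun i₁ i₂ hne j j' => ?_⟩
  · rcases eq_or_ne i' i with rfl | hi'
    · simpa using hT
    · simpa [hi'] using hinj i'
  · rcases eq_or_ne i₁ i with rfl | h₁
    · simpa [hne.symm] using (hTf i₂ hne.symm j' j).symm
    rcases eq_or_ne i₂ i with rfl | h₂
    · simpa [h₁] using hTf i₁ h₁ j j'
    · simpa [h₁, h₂] using hdisj i₁ i₂ hne j j'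

lemma injective_uncurry_snoc {k : ℕ} {f : Fin k → κ → α}
    (hf : Injective (uncurry f)) {T : κ → α} (hT : Injective T)
    (hTf : ∀ i j j', f i j ≠ T j') :
    Injective (uncurry (Fin.snoc (α := fun _ => κ → α) f T)) := by
  obtain ⟨hinj, hdisj⟩ := injective_uncurry_iff.1 hf
  refine injective_uncurry_iff.2 ⟨Fin.lastCases ?_ fun i => ?_, Fin.lastCases ?_ fun i => ?_⟩
  · simpa using hT
  · simpa using hinj i
  · refine Fin.lastCases (by simp) fun i' _ j j' => ?_
    simpa using (hTf i' j' j).symm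
  · refine Fin.lastCases (fun _ j j' => by simpa using hTf i j j') fun i' hne j j' => ?_
    simpa using hdisj i i' (fun h => hne (h ▸ rfl)) j j'

end DisjointFamilies

section Triangles

variable {V : Type*} {G : SimpleGraph V}

def IsTriangle (G : SimpleGraph V) (T : Fin 3 → V) : Prop :=
  G.Adj (T 0) (T 1) ∧ G.Adj (T 1) (T 2) ∧ G.Adj (T 0) (T 2)

lemma IsTriangle.adj {T : Fin 3 → V} (h : IsTriangle G T) {j j' : Fin 3} (hne : j ≠ j') :
    G.Adj (T j) (T j') := by
  obtain ⟨h₀₁, h₁₂, h₀₂⟩ := h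
  fin_cases j <;> fin_cases j' <;>
    first | exact absurd rfl hne | assumption | exact SimpleGraph.Adj.symm ‹_›

lemma IsTriangle.injective {T : Fin 3 → V} (h : IsTriangle G T) : Injective T :=
  fun _ _ hjj' => by_contra fun hne => (h.adj hne).ne hjj'

lemma hasIndepTriangles_succ_of_replace {k : ℕ} {f : Fin k → Fin 3 → V}
    (hinj : Injective (uncurry f)) (htri : ∀ i, IsTriangle G (f i))
    (i : Fin k) {T₁ T₂ : Fin 3 → V} (h₁ : IsTriangle G T₁) (h₂ : IsTriangle G T₂)
    (h₁₂ : ∀ j j', T₁ j ≠ T₂ j')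
    (h₁f : ∀ i' ≠ i, ∀ j j', f i' j ≠ T₁ j') (h₂f : ∀ i' ≠ i, ∀ j j', f i' j ≠ T₂ j') :
    HasIndepTriangles G (k + 1) := by
  classical
  have hupd := injective_uncurry_update hinj i h₁.injective h₁f
  refine ⟨Fin.snoc (α := fun _ => Fin 3 → V) (update f i T₁) T₂,
    injective_uncurry_snoc hupd h₂.injective fun i' j j' => ?_, Fin.lastCases ?_ fun i' => ?_⟩
  · rcases eq_or_ne i' i with rfl | hi'
    · simpa using h₁₂ j j'
    · simpa [hi'] using h₂f i' hi' j j'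
  · simpa [IsTriangle] using h₂
  · rcases eq_or_ne i' i with rfl | hi'
    · simpa [IsTriangle] using h₁
    · simpa [IsTriangle, hi'] using htri i'

lemma exists_not_adj_of_friendly {t : ℕ} {f : Fin (t + 1) → Fin 3 → V}
    (hG : ¬ HasIndepTriangles G (t + 2)) (hinj : Injective (uncurry f))
    (htri : ∀ i, IsTriangle G (f i)) (i : Fin (t + 1)) (j : Fin 3) {e : Sym2 V}
    (he : e ∈ G.edgeSet) (hfr : Friendly G (f i j) e) (he_unc : ∀ v ∈ e, ∀ i j, f i j ≠ v)
    {d : V} (hd : ∀ i j, f i j ≠ d) (hde : d ∉ e) :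
    ∃ j', ¬ G.Adj (f i j') d := by
  induction e using Sym2.ind with | _ a b => ?_
  by_contra! hall
  have ha := he_unc a (by simp)
  have hb := he_unc b (by simp)
  have hda : d ≠ a := fun h => hde (by simp [h])
  have hdb : d ≠ b := fun h => hde (by simp [h])
  have hj : j ≠ j + 1 ∧ j ≠ j + 2 ∧ j + 1 ≠ j + 2 := by fin_cases j <;> decide
  have hfi := (injective_uncurry_iff.1 hinj).2
  have hfii := (htri i).injective
  refine hG (hasIndepTriangles_succ_of_replace hinj htri i
    (T₁ := ![f i j, a, b]) (T₂ := ![f i (j + 1), f i (j + 2), d]) ?_ ?_ ?_ ?_ ?_)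
  · exact ⟨hfr a (by simp), he, hfr b (by simp)⟩
  · exact ⟨(htri i).adj hj.2.2, hall _, hall _⟩
  all_goals
    simp only [Fin.forall_fin_succ, IsEmpty.forall_iff, Fin.succ_zero_eq_one, Fin.succ_one_eq_two,
      Matrix.cons_val_zero, Matrix.cons_val_one, Matrix.cons_val_two, Matrix.tail_cons,
      Matrix.head_cons]
    grind

end Triangles

lemma IsMatchingOn.notMem_or_notMem {V : Type*} {G : SimpleGraph V} {S : Set V}
    {F : Finset (Sym2 V)} (hF : IsMatchingOn G S F) {e₁ e₂ : Sym2 V} (he₁ : e₁ ∈ F)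
    (he₂ : e₂ ∈ F) (hne : e₁ ≠ e₂) (v : V) : v ∉ e₁ ∨ v ∉ e₂ :=
  or_iff_not_imp_left.2 fun hv => hF.2 he₁ he₂ hne v (not_not.1 hv)

lemma ncard_edges_between_le {V ι : Type*} {G : SimpleGraph V} (f : ι → Fin 3 → V)
    (A : Finset ι) {D : Set V} (hD : D.Finite) (h : ∀ i ∈ A, ∀ v ∈ D, ∃ j, ¬ G.Adj (f i j) v) :
    Set.ncard {e | e ∈ G.edgeSet ∧ ∃ u v : V, e = s(u, v) ∧ (∃ i ∈ A, ∃ j, f i j = u) ∧ v ∈ D}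
      ≤ 2 * #A * D.ncard := by
  classical
  set S := (A ×ˢ hD.toFinset).biUnion fun p =>
    ({j | G.Adj (f p.1 j) p.2} : Finset (Fin 3)).image fun j => s(f p.1 j, p.2)
  have hsub : {e | e ∈ G.edgeSet ∧ ∃ u v : V, e = s(u, v) ∧ (∃ i ∈ A, ∃ j, f i j = u) ∧ v ∈ D}
      ⊆ S := by
    rintro _ ⟨hadj, _, v, rfl, ⟨i, hi, j, rfl⟩, hv⟩
    simp only [S, coe_biUnion, coe_product, Set.Finite.coe_toFinset, coe_image, coe_filter]
    exact Set.mem_biUnion (x := (i, v)) ⟨hi, hv⟩ ⟨j, by simpa using hadj, rfl⟩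
  have hfiber : ∀ p ∈ A ×ˢ hD.toFinset, #({j | G.Adj (f p.1 j) p.2} : Finset (Fin 3)) ≤ 2 := by
    rintro ⟨i, v⟩ hp
    rw [mem_product, Set.Finite.mem_toFinset] at hp
    obtain ⟨j, hj⟩ := h i hp.1 v hp.2
    have := card_lt_card ((filter_ssubset (p := fun j => G.Adj (f i j) v)).2 ⟨j, mem_univ j, hj⟩)
    rw [card_univ, Fintype.card_fin] at this
    exact Nat.le_of_lt_succ this
  calc _ ≤ (S : Set (Sym2 V)).ncard := Set.ncard_le_ncard hsub S.finite_toSet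
    _ = #S := Set.ncard_coe_finset S
    _ ≤ #(A ×ˢ hD.toFinset) * 2 :=
      card_biUnion_le_card_mul _ _ _ fun p hp => card_image_le.trans (hfiber p hp)
    _ = 2 * #A * D.ncard := by rw [card_product, Set.ncard_eq_toFinset_card D hD]; ring

lemma ncard_uncovered_add {V : Type*} [Finite V] {k : ℕ} {f : Fin k → Fin 3 → V}
    (hinj : Injective (uncurry f)) :
    {x | ∀ i j, f i j ≠ x}.ncard + 3 * k = Nat.card V := by
  have hcompl : {x | ∀ i j, f i j ≠ x} = (Set.range (uncurry f))ᶜ := by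
    ext; simp
  rw [hcompl, ← Set.ncard_compl_add_ncard, Set.ncard_range_of_injective hinj]
  simp [mul_comm]

/-- With `M` (given by `f`) a family of `t+1` disjoint triangles in a graph `G` on `n`
vertices with no `t+2` disjoint triangles, `D` the induced subgraph on the uncovered
vertices, `F` a matching in `D`, and `A` the set of triangles of `M` containing a vertex
friendly with at least two edges of `F`: `e_G(V(A), V(D)) ≤ 2|A|(n - 3(t+1))`. -/
theorem edges_A_to_D_bound (t n : ℕ) (G : SimpleGraph (Fin n))
    (hG : ¬ HasIndepTriangles G (t + 2))
    (f : Fin (t + 1) → Fin 3 → Fin n)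
    (hinj : Function.Injective fun p : Fin (t + 1) × Fin 3 => f p.1 p.2)
    (htri : ∀ i, G.Adj (f i 0) (f i 1) ∧ G.Adj (f i 1) (f i 2) ∧ G.Adj (f i 0) (f i 2))
    (Dset : Set (Fin n)) (hDset : Dset = {x | ∀ i j, f i j ≠ x})
    (F : Finset (Sym2 (Fin n))) (hF : IsMatchingOn G Dset F)
    (A : Finset (Fin (t + 1)))
    (hA : ∀ i, i ∈ A ↔ ∃ j : Fin 3, ∃ e₁ ∈ F, ∃ e₂ ∈ F,
      e₁ ≠ e₂ ∧ Friendly G (f i j) e₁ ∧ Friendly G (f i j) e₂) :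
    (Set.ncard {e | e ∈ G.edgeSet ∧ ∃ u v : Fin n, e = s(u, v) ∧
        (∃ i ∈ A, ∃ j, f i j = u) ∧ v ∈ Dset} : ℤ) ≤
      2 * A.card * ((n : ℤ) - 3 * (t + 1)) := by
  subst hDset
  have hnonadj : ∀ i ∈ A, ∀ d ∈ {x | ∀ i j, f i j ≠ x}, ∃ j, ¬ G.Adj (f i j) d := by
    intro i hi d hd
    obtain ⟨j, e₁, he₁, e₂, he₂, hne, hfr₁, hfr₂⟩ := (hA i).1 hi
    obtain ⟨e, he, hfr, hde⟩ : ∃ e ∈ F, Friendly G (f i j) e ∧ d ∉ e :=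
      (hF.notMem_or_notMem he₁ he₂ hne d).elim (fun h => ⟨e₁, he₁, hfr₁, h⟩)
        (fun h => ⟨e₂, he₂, hfr₂, h⟩)
    exact exists_not_adj_of_friendly hG hinj htri i j (hF.1 e he).1 hfr (hF.1 e he).2 hd hde
  have hcount := ncard_edges_between_le f A (Set.toFinite _) hnonadj
  have hD := ncard_uncovered_add hinj
  rw [Nat.card_fin] at hD
  have hD' : ({x | ∀ i j, f i j ≠ x}.ncard : ℤ) = n - 3 * (t + 1) := by omega
  calc _ ≤ ((2 * #A * {x | ∀ i j, f i j ≠ x}.ncard : ℕ) : ℤ) := by exact_mod_cast hcount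
    _ = _ := by push_cast; rw [hD']
end

section
/- Let t ≥ 0 and let G be a simple graph containing no t+2 pairwise vertex-disjoint triangles. Let M be a family of t+1 pairwise vertex-disjoint triangles in G, let D be the induced subgraph of G on the vertices not covered by M, let 𝓜 be a matching in D, and let A be the set of triangles of M that contain a vertex friendly in G with at least two distinct edges of 𝓜, with a = |A|. Then the number of edges of G inside V(A) satisfies e(G[V(A)]) ≤ C(3a,2) − 2·C(a,2), and the number of edges of G inside V(M) satisfies e(G[V(M)]) ≤ C(3(t+1),2) − 2·C(a,2). -/
open Finset Function

section

variable {V : Type*} {G : SimpleGraph V}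

theorem HasIndepTriangles.of_isNClique {ι : Type*} [Fintype ι] (T : ι → Finset V)
    (hT : ∀ k, G.IsNClique 3 (T k)) (hdisj : Pairwise (Disjoint on T)) :
    HasIndepTriangles G (Fintype.card ι) := by
  classical
  have hv : ∀ k, ∃ v : Fin 3 → V, T k = {v 0, v 1, v 2} := fun k => by
    obtain ⟨a, b, c, -, -, -, h⟩ := card_eq_three.1 (hT k).card_eq
    exact ⟨![a, b, c], h⟩
  choose v hv using hv
  have hadj k : G.Adj (v k 0) (v k 1) ∧ G.Adj (v k 0) (v k 2) ∧ G.Adj (v k 1) (v k 2) :=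
    SimpleGraph.is3Clique_triple_iff.1 (hv k ▸ hT k)
  have hmem k c : v k c ∈ T k := by rw [hv k]; fin_cases c <;> simp
  let e := (Fintype.equivFin ι).symm
  refine ⟨fun m => v (e m), ?_, fun m => ⟨(hadj _).1, (hadj _).2.2, (hadj _).2.1⟩⟩
  rintro ⟨m, c⟩ ⟨m', c'⟩ h
  change v (e m) c = v (e m') c' at h
  obtain rfl : m = m' := e.injective <| hdisj.eq <| not_disjoint_iff.2 ⟨_, hmem _ c, h ▸ hmem _ c'⟩
  obtain ⟨h01, h02, h12⟩ := hadj (e m)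
  revert h
  fin_cases c <;> fin_cases c' <;> simp [h01.ne, h02.ne, h12.ne, h01.ne', h02.ne', h12.ne']

theorem hasIndepTriangles_exchange {ι : Type*} [Fintype ι] (T : ι → Finset V)
    (hT : ∀ k, G.IsNClique 3 (T k)) (hTdisj : Pairwise (Disjoint on T)) {i j : ι} (hij : i ≠ j)
    (N : Fin 3 → Finset V) (hN : ∀ r, G.IsNClique 3 (N r)) (hNdisj : Pairwise (Disjoint on N))
    (hTN : ∀ k, k ≠ i → k ≠ j → ∀ r, Disjoint (T k) (N r)) :
    HasIndepTriangles G (Fintype.card ι + 1) := by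
  classical
  have hcard : Fintype.card ({k // k ≠ i ∧ k ≠ j} ⊕ Fin 3) = Fintype.card ι + 1 := by
    have hij' : #{i, j} = 2 := card_pair hij
    have hle := card_le_univ ({i, j} : Finset ι)
    have hcompl : ({k | k ≠ i ∧ k ≠ j} : Finset ι) = univ \ {i, j} := by ext; simp
    rw [Fintype.card_sum, Fintype.card_fin, Fintype.card_subtype, hcompl, card_univ_sdiff]
    omega
  rw [← hcard]
  refine HasIndepTriangles.of_isNClique (Sum.elim (fun k => T k.1) N) ?_ ?_
  · rintro (k | r)
    exacts [hT k, hN r]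
  · rintro (k | r) (k' | r') h
    · exact hTdisj fun h' => h (congrArg Sum.inl (Subtype.ext h'))
    · exact hTN k k.2.1 k.2.2 r'
    · exact (hTN k' k'.2.1 k'.2.2 r).symm
    · exact hNdisj fun h' => h (congrArg Sum.inr h')

theorem exists_rel_both_of_not_rel_unique {α β : Type*} {R : α → β → Prop} {a₁ a₂ : α}
    (ha : a₁ ≠ a₂) (b₁ b₂ : β) (huniq : ∀ a b a' b', ¬R a b → ¬R a' b' → a = a') :
    ∃ a, (a = a₁ ∨ a = a₂) ∧ R a b₁ ∧ R a b₂ := by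
  by_contra! h
  have hbad a (ha : a = a₁ ∨ a = a₂) : ∃ b, ¬R a b := by
    by_cases hb : R a b₁
    exacts [⟨b₂, h a ha hb⟩, ⟨b₁, hb⟩]
  obtain ⟨b, hb⟩ := hbad a₁ (.inl rfl)
  obtain ⟨b', hb'⟩ := hbad a₂ (.inr rfl)
  exact ha (huniq _ _ _ _ hb hb')

theorem Friendly.isNClique_insert [DecidableEq V] {w x y : V} (hw : Friendly G w s(x, y))
    (hxy : G.Adj x y) :
    G.IsNClique 3 {w, x, y} :=
  SimpleGraph.is3Clique_triple_iff.2
    ⟨hw x (Sym2.mem_mk_left x y), hw y (Sym2.mem_mk_right x y), hxy⟩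

theorem adj_of_triangle {v : Fin 3 → V}
    (hv : G.Adj (v 0) (v 1) ∧ G.Adj (v 1) (v 2) ∧ G.Adj (v 0) (v 2)) {a b : Fin 3} (hab : a ≠ b) :
    G.Adj (v a) (v b) := by
  obtain ⟨h01, h12, h02⟩ := hv
  fin_cases a <;> fin_cases b <;> first | exact absurd rfl hab | assumption | exact G.adj_symm ‹_›

theorem exists_two_not_adj_between_triangles {ι : Type*} [Fintype ι] {f : ι → Fin 3 → V}
    (hG : ¬ HasIndepTriangles G (Fintype.card ι + 1))
    (hinj : Injective fun p : ι × Fin 3 => f p.1 p.2)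
    (htri : ∀ i, G.Adj (f i 0) (f i 1) ∧ G.Adj (f i 1) (f i 2) ∧ G.Adj (f i 0) (f i 2))
    {F : Finset (Sym2 V)} (hF : IsMatchingOn G {x | ∀ i j, f i j ≠ x} F) {i j : ι} (hij : i ≠ j)
    (hi : ∃ c, ∃ e₁ ∈ F, ∃ e₂ ∈ F, e₁ ≠ e₂ ∧ Friendly G (f i c) e₁ ∧ Friendly G (f i c) e₂)
    (hj : ∃ c, ∃ e ∈ F, Friendly G (f j c) e) :
    ∃ p q : Fin 3 × Fin 3, p ≠ q ∧ ¬ G.Adj (f i p.1) (f j p.2) ∧ ¬ G.Adj (f i q.1) (f j q.2) := by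
  classical
  by_contra! hle
  obtain ⟨c₂, e, heF, hwe⟩ := hj
  obtain ⟨c₁, d, hdF, hde, hwd⟩ : ∃ c₁, ∃ d ∈ F, d ≠ e ∧ Friendly G (f i c₁) d := by
    obtain ⟨c, e₁, h₁, e₂, h₂, hne, hw₁, hw₂⟩ := hi
    by_cases h : e₁ = e
    exacts [⟨c, e₂, h₂, h ▸ hne.symm, hw₂⟩, ⟨c, e₁, h₁, h, hw₁⟩]
  have hother (c : Fin 3) : ∃ a b : Fin 3, a ≠ c ∧ b ≠ c ∧ a ≠ b := by fin_cases c <;> decide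
  obtain ⟨k₁, k₂, hk₁, hk₂, hk⟩ := hother c₁
  obtain ⟨l₁, l₂, hl₁, hl₂, hl⟩ := hother c₂
  obtain ⟨K, hK, hKl₁, hKl₂⟩ := exists_rel_both_of_not_rel_unique
    (R := fun a b => G.Adj (f i a) (f j b)) hk l₁ l₂ fun a b a' b' h h' =>
      congrArg Prod.fst <| of_not_not fun hne => h' (hle (a, b) (a', b') hne h)
  have hKc : K ≠ c₁ := by rcases hK with rfl | rfl <;> assumption
  obtain ⟨x, y⟩ := d
  obtain ⟨x', y'⟩ := e
  have hf a b u v : f a u = f b v ↔ a = b ∧ u = v :=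
    (hinj.eq_iff (a := (a, u)) (b := (b, v))).trans Prod.mk_inj
  have hout := fun z hz => (hF.1 _ hdF).2 z hz
  have hout' := fun z hz => (hF.1 _ heF).2 z hz
  have hdisj := hF.2 (mem_coe.2 hdF) (mem_coe.2 heF) hde
  simp only [Sym2.mem_iff, forall_eq_or_imp, forall_eq] at hout hout' hdisj
  apply hG
  refine hasIndepTriangles_exchange (fun k => {f k 0, f k 1, f k 2})
    (fun k => SimpleGraph.is3Clique_triple_iff.2 ⟨(htri k).1, (htri k).2.2, (htri k).2.1⟩) ?_ hij
    ![{f i c₁, x, y}, {f j c₂, x', y'}, {f i K, f j l₁, f j l₂}] ?_ ?_ ?_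
  · intro a b hab
    simp [onFun, hf, hab.symm]
  · intro r
    fin_cases r
    · exact hwd.isNClique_insert (hF.1 _ hdF).1
    · exact hwe.isNClique_insert (hF.1 _ heF).1
    · exact SimpleGraph.is3Clique_triple_iff.2 ⟨hKl₁, hKl₂, adj_of_triangle (htri j) hl⟩
  · intro r r' hr
    fin_cases r <;> fin_cases r' <;> simp_all [onFun, eq_comm]
  · intro k hki hkj r
    fin_cases r <;> simp_all [eq_comm]

theorem Sym2.card_le_two_mul_card_image {α : Type*} [DecidableEq α]
    (s : Finset (α × α)) :
    #s ≤ 2 * #(s.image Sym2.mk.uncurry) := by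
  refine card_le_mul_card_image s 2 fun z _ => ?_
  induction z using Sym2.ind with
  | _ x y =>
    calc #{p ∈ s | Sym2.mk.uncurry p = s(x, y)}
        ≤ #({(x, y), (y, x)} : Finset (α × α)) := card_le_card fun p hp => by
          obtain ⟨a, b⟩ := p
          simp only [mem_filter, Function.uncurry_apply_pair, Sym2.eq_iff] at hp
          rcases hp.2 with ⟨rfl, rfl⟩ | ⟨rfl, rfl⟩ <;> simp
      _ ≤ 2 := card_le_two

theorem ncard_edges_le_choose_two_sub (S : Finset V) (N : Finset (Sym2 V))
    (hN : ∀ e ∈ N, e ∈ Gᶜ.edgeSet ∧ ∀ x ∈ e, x ∈ S) :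
    {e | e ∈ G.edgeSet ∧ ∀ x ∈ e, x ∈ S}.ncard ≤ (#S).choose 2 - #N := by
  classical
  have hpairs (e : Sym2 V) (he : ¬e.IsDiag) (hS : ∀ x ∈ e, x ∈ S) :
      e ∈ S.offDiag.image Sym2.mk.uncurry := by
    induction e using Sym2.ind with
    | _ x y => exact mem_image.2 ⟨(x, y), mem_offDiag.2
        ⟨hS x (Sym2.mem_mk_left x y), hS y (Sym2.mem_mk_right x y), he⟩, rfl⟩
  have hsub : {e | e ∈ G.edgeSet ∧ ∀ x ∈ e, x ∈ S} ⊆ ↑(S.offDiag.image Sym2.mk.uncurry \ N) :=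
    fun e ⟨he, hS⟩ => mem_sdiff.2 ⟨hpairs e (G.not_isDiag_of_mem_edgeSet he) hS,
      fun heN => Set.disjoint_left.1
        (SimpleGraph.disjoint_edgeSet.2 disjoint_compl_right) he (hN e heN).1⟩
  have hNsub : N ⊆ S.offDiag.image Sym2.mk.uncurry := fun e he =>
    hpairs e (Gᶜ.not_isDiag_of_mem_edgeSet (hN e he).1) (hN e he).2
  calc _ ≤ #(S.offDiag.image Sym2.mk.uncurry \ N) :=
        (Set.ncard_le_ncard hsub (finite_toSet _)).trans_eq (Set.ncard_coe_finset _)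
    _ = _ := by rw [card_sdiff_of_subset hNsub, Sym2.card_image_offDiag]

theorem exists_nonEdges_between_triangles {ι : Type*} {f : ι → Fin 3 → V}
    (hinj : Injective fun p : ι × Fin 3 => f p.1 p.2) (A : Finset ι)
    (h : ∀ i ∈ A, ∀ j ∈ A, i ≠ j → ∃ p q : Fin 3 × Fin 3,
      p ≠ q ∧ ¬ G.Adj (f i p.1) (f j p.2) ∧ ¬ G.Adj (f i q.1) (f j q.2)) :
    ∃ N : Finset (Sym2 V), 2 * (#A).choose 2 ≤ #N ∧
      ∀ e ∈ N, e ∈ Gᶜ.edgeSet ∧ ∀ x ∈ e, ∃ i ∈ A, ∃ j, f i j = x := by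
  classical
  let Q := {x ∈ A.offDiag ×ˢ (univ : Finset (Fin 3 × Fin 3)) |
    ¬ G.Adj (f x.1.1 x.2.1) (f x.1.2 x.2.2)}
  let g (x : (ι × ι) × (Fin 3 × Fin 3)) : V × V := (f x.1.1 x.2.1, f x.1.2 x.2.2)
  have hg : Injective g := fun x y hxy => by
    have h₁ := @hinj (x.1.1, x.2.1) (y.1.1, y.2.1) (congrArg Prod.fst hxy)
    have h₂ := @hinj (x.1.2, x.2.2) (y.1.2, y.2.2) (congrArg Prod.snd hxy)
    simp only [Prod.mk_inj] at h₁ h₂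
    ext <;> simp [h₁, h₂]
  have hQ : #A.offDiag • 2 ≤ #Q := by
    rw [card_eq_sum_card_fiberwise (f := Prod.fst) (t := A.offDiag)
      fun x hx => (mem_product.1 (mem_filter.1 hx).1).1]
    refine card_nsmul_le_sum _ _ _ fun ij hij => ?_
    obtain ⟨hi, hj, hne⟩ := mem_offDiag.1 hij
    obtain ⟨p, q, hpq, hp, hq⟩ := h _ hi _ hj hne
    exact one_lt_card.2 ⟨(ij, p), by simp [hij, hp], (ij, q), by simp [hij, hq], by simp [hpq]⟩
  refine ⟨(Q.image g).image Sym2.mk.uncurry, ?_, ?_⟩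
  · have := Sym2.card_le_two_mul_card_image (Q.image g)
    rw [card_image_of_injective _ hg, smul_eq_mul] at *
    rw [← Sym2.card_image_offDiag, Sym2.two_mul_card_image_offDiag]
    omega
  · intro e he
    simp only [mem_image, mem_filter, mem_product, mem_offDiag, Q, g] at he
    obtain ⟨_, ⟨⟨⟨i, j⟩, u, v⟩, ⟨⟨⟨hi, hj, hij⟩, -⟩, hnadj⟩, rfl⟩, rfl⟩ := he
    refine ⟨(G.compl_adj _ _).2
      ⟨fun h => hij (congrArg Prod.fst (@hinj (i, u) (j, v) h)), hnadj⟩, ?_⟩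
    simp only [Function.uncurry_apply_pair, Sym2.mem_iff, forall_eq_or_imp, forall_eq]
    exact ⟨⟨i, hi, u, rfl⟩, ⟨j, hj, v, rfl⟩⟩

theorem ncard_edges_on_triangles_le {ι : Type*} {f : ι → Fin 3 → V}
    (hinj : Injective fun p : ι × Fin 3 => f p.1 p.2) {A B : Finset ι} (hAB : A ⊆ B)
    {N : Finset (Sym2 V)} (hN : ∀ e ∈ N, e ∈ Gᶜ.edgeSet ∧ ∀ x ∈ e, ∃ i ∈ A, ∃ j, f i j = x) :
    {e | e ∈ G.edgeSet ∧ ∀ x ∈ e, ∃ i ∈ B, ∃ j, f i j = x}.ncard ≤ (3 * #B).choose 2 - #N := by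
  classical
  let S := (B ×ˢ univ).image fun p : ι × Fin 3 => f p.1 p.2
  have hS x : (∃ i ∈ B, ∃ j, f i j = x) ↔ x ∈ S := by simp [S]
  have hcard : #S = 3 * #B := by
    rw [card_image_of_injective _ hinj, card_product, card_univ, Fintype.card_fin, mul_comm]
  simp only [hS, ← hcard]
  refine ncard_edges_le_choose_two_sub S N fun e he => ⟨(hN e he).1, fun x hx => ?_⟩
  obtain ⟨i, hi, j, rfl⟩ := (hN e he).2 x hx
  exact (hS _).1 ⟨i, hAB hi, j, rfl⟩

end

theorem edges_inside_A_and_M_bound_general {V : Type*} (t : ℕ)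
    (G : SimpleGraph V) (hG : ¬ HasIndepTriangles G (t + 2))
    (f : Fin (t + 1) → Fin 3 → V)
    (hinj : Function.Injective fun p : Fin (t + 1) × Fin 3 => f p.1 p.2)
    (htri : ∀ i, G.Adj (f i 0) (f i 1) ∧ G.Adj (f i 1) (f i 2) ∧ G.Adj (f i 0) (f i 2))
    (Dset : Set V) (hDset : Dset = {x | ∀ i j, f i j ≠ x})
    (F : Finset (Sym2 V)) (hF : IsMatchingOn G Dset F)
    (A : Finset (Fin (t + 1)))
    (hA : ∀ i, i ∈ A ↔ ∃ j : Fin 3, ∃ e₁ ∈ F, ∃ e₂ ∈ F,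
      e₁ ≠ e₂ ∧ Friendly G (f i j) e₁ ∧ Friendly G (f i j) e₂) :
    Set.ncard {e | e ∈ G.edgeSet ∧ ∀ x ∈ e, ∃ i ∈ A, ∃ j, f i j = x} ≤
      (3 * A.card).choose 2 - 2 * A.card.choose 2 ∧
    Set.ncard {e | e ∈ G.edgeSet ∧ ∀ x ∈ e, ∃ i, ∃ j, f i j = x} ≤
      (3 * (t + 1)).choose 2 - 2 * A.card.choose 2 := by
  subst hDset
  obtain ⟨N, hNcard, hN⟩ := exists_nonEdges_between_triangles hinj A fun i hi j hj hij => by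
    obtain ⟨c, e, he, -, -, -, hw, -⟩ := (hA j).1 hj
    exact exists_two_not_adj_between_triangles (by simpa using hG) hinj htri hF hij ((hA i).1 hi)
      ⟨c, e, he, hw⟩
  have hbound (B : Finset (Fin (t + 1))) (hAB : A ⊆ B) :=
    (ncard_edges_on_triangles_le hinj hAB hN).trans (Nat.sub_le_sub_left hNcard _)
  exact ⟨hbound A subset_rfl, by simpa using hbound univ (subset_univ A)⟩

/-- With `A` (of size `a`) the set of triangles of `M` containing a vertex friendly with
at least two edges of the matching `F` in `D`:
`e(G[V(A)]) ≤ C(3a,2) - 2C(a,2)` and `e(G[V(M)]) ≤ C(3(t+1),2) - 2C(a,2)`. -/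
theorem edges_inside_A_and_M_bound {V : Type*} [Fintype V] [DecidableEq V] (t : ℕ)
    (G : SimpleGraph V) (hG : ¬ HasIndepTriangles G (t + 2))
    (f : Fin (t + 1) → Fin 3 → V)
    (hinj : Function.Injective fun p : Fin (t + 1) × Fin 3 => f p.1 p.2)
    (htri : ∀ i, G.Adj (f i 0) (f i 1) ∧ G.Adj (f i 1) (f i 2) ∧ G.Adj (f i 0) (f i 2))
    (Dset : Set V) (hDset : Dset = {x | ∀ i j, f i j ≠ x})
    (F : Finset (Sym2 V)) (hF : IsMatchingOn G Dset F)
    (A : Finset (Fin (t + 1)))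
    (hA : ∀ i, i ∈ A ↔ ∃ j : Fin 3, ∃ e₁ ∈ F, ∃ e₂ ∈ F,
      e₁ ≠ e₂ ∧ Friendly G (f i j) e₁ ∧ Friendly G (f i j) e₂) :
    Set.ncard {e | e ∈ G.edgeSet ∧ ∀ x ∈ e, ∃ i ∈ A, ∃ j, f i j = x} ≤
      (3 * A.card).choose 2 - 2 * A.card.choose 2 ∧
    Set.ncard {e | e ∈ G.edgeSet ∧ ∀ x ∈ e, ∃ i, ∃ j, f i j = x} ≤
      (3 * (t + 1)).choose 2 - 2 * A.card.choose 2 :=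
  edges_inside_A_and_M_bound_general t G hG f hinj htri Dset hDset F hF A hA
end

section
/- Let t ≥ 0 and let G be a simple graph on n vertices containing no t+2 pairwise vertex-disjoint triangles. Let M be a family of t+1 pairwise vertex-disjoint triangles in G, let D be the induced subgraph of G on the vertices not covered by M (so |V(D)| = n − 3(t+1)), let 𝓜 be a maximum matching of D of size γ, let A be the set of triangles of M that contain a vertex friendly in G with at least two distinct edges of 𝓜, and let B = M \ A with b = |B|. Then every vertex v belonging to a triangle of B satisfies |N_G(v) ∩ V(D)| ≤ (n − 3(t+1)) − γ + 1, and consequently the number of edges of G between V(B) and V(D) is at most 3b(n − 3(t+1) − γ + 1). -/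
/-- With `F` a maximum matching of `D` of size `γ`, `A` the triangles of `M` containing a
vertex friendly with two edges of `F`, and `B = M \ A` of size `b`: every vertex `v` of a
triangle of `B` has `|N_G(v) ∩ V(D)| ≤ n - 3(t+1) - γ + 1`, and
`e_G(V(B), V(D)) ≤ 3b(n - 3(t+1) - γ + 1)`. -/
theorem edges_B_to_D_bound (t n : ℕ) (G : SimpleGraph (Fin n))
    (hG : ¬ HasIndepTriangles G (t + 2))
    (f : Fin (t + 1) → Fin 3 → Fin n)
    (hinj : Function.Injective fun p : Fin (t + 1) × Fin 3 => f p.1 p.2)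
    (htri : ∀ i, G.Adj (f i 0) (f i 1) ∧ G.Adj (f i 1) (f i 2) ∧ G.Adj (f i 0) (f i 2))
    (Dset : Set (Fin n)) (hDset : Dset = {x | ∀ i j, f i j ≠ x})
    (F : Finset (Sym2 (Fin n))) (hF : IsMatchingOn G Dset F)
    (hFmax : ∀ F' : Finset (Sym2 (Fin n)), IsMatchingOn G Dset F' → F'.card ≤ F.card)
    (γ : ℕ) (hγ : γ = F.card)
    (A : Finset (Fin (t + 1)))
    (hA : ∀ i, i ∈ A ↔ ∃ j : Fin 3, ∃ e₁ ∈ F, ∃ e₂ ∈ F,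
      e₁ ≠ e₂ ∧ Friendly G (f i j) e₁ ∧ Friendly G (f i j) e₂) :
    (∀ i : Fin (t + 1), i ∉ A → ∀ j : Fin 3,
      ((G.neighborSet (f i j) ∩ Dset).ncard : ℤ) ≤ (n : ℤ) - 3 * (t + 1) - γ + 1) ∧
    (Set.ncard {e | e ∈ G.edgeSet ∧ ∃ u v : Fin n, e = s(u, v) ∧
        (∃ i : Fin (t + 1), i ∉ A ∧ ∃ j, f i j = u) ∧ v ∈ Dset} : ℤ) ≤
      3 * Aᶜ.card * ((n : ℤ) - 3 * (t + 1) - γ + 1) := by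
  classical
  obtain ⟨hFmem, hFdisj⟩ := hF
  -- Finset version of Dset
  set DF : Finset (Fin n) := Finset.univ.filter (· ∈ Dset) with hDFdef
  have hDFmem : ∀ x, x ∈ DF ↔ x ∈ Dset := by intro x; simp [hDFdef]
  -- the image of f
  set IF : Finset (Fin n) :=
    (Finset.univ : Finset (Fin (t + 1) × Fin 3)).image (fun p => f p.1 p.2) with hIFdef
  have hIFcard : IF.card = 3 * (t + 1) := by
    rw [hIFdef, Finset.card_image_of_injective _ hinj, Finset.card_univ]
    simp [Fintype.card_prod]; ring
  have hDFcompl : DF = IFᶜ := by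
    ext x
    simp only [hDFmem, hDset, Set.mem_setOf_eq, hIFdef, Finset.mem_compl, Finset.mem_image,
      Finset.mem_univ, true_and]
    constructor
    · rintro h ⟨p, hp⟩; exact h p.1 p.2 hp
    · intro h i j hij; exact h ⟨(i, j), hij⟩
  have h3t : 3 * (t + 1) ≤ n := by
    have := Finset.card_le_univ IF
    simpa [hIFcard] using this
  have hDFcard : DF.card = n - 3 * (t + 1) := by
    rw [hDFcompl, Finset.card_compl, hIFcard]; simp
  -- vertex finset of an edge
  set efs : Sym2 (Fin n) → Finset (Fin n) := fun e => Finset.univ.filter (· ∈ e) with hefs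
  have hefsmem : ∀ e x, x ∈ efs e ↔ x ∈ e := by intro e x; simp [hefs]
  have hefscard : ∀ e ∈ F, (efs e).card = 2 := by
    intro e he
    have hne : ¬ e.IsDiag := by
      have := (hFmem e he).1
      exact SimpleGraph.not_isDiag_of_mem_edgeSet G this
    induction e using Sym2.ind with
    | _ a b =>
      have hab : a ≠ b := by simpa using hne
      have : efs s(a,b) = {a, b} := by ext x; simp [hefs, Sym2.mem_iff]
      rw [this, Finset.card_insert_of_notMem (by simp [hab]), Finset.card_singleton]
  -- matched vertices
  set MF : Finset (Fin n) := F.biUnion efs with hMF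
  have hMFdisj : ∀ e ∈ F, ∀ e' ∈ F, e ≠ e' → Disjoint (efs e) (efs e') := by
    intro e he e' he' hne
    rw [Finset.disjoint_left]
    intro x hx hx'
    exact hFdisj he he' hne x ((hefsmem e x).1 hx) ((hefsmem e' x).1 hx')
  have hMFcard : MF.card = 2 * γ := by
    rw [hMF, Finset.card_biUnion hMFdisj, hγ]
    rw [Finset.sum_congr rfl hefscard]
    simp [Nat.mul_comm]
  have hMFsub : MF ⊆ DF := by
    intro x hx
    rw [hMF, Finset.mem_biUnion] at hx
    obtain ⟨e, he, hxe⟩ := hx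
    exact (hDFmem x).2 ((hFmem e he).2 x ((hefsmem e x).1 hxe))
  have h2γ : 2 * γ ≤ DF.card := by rw [← hMFcard]; exact Finset.card_le_card hMFsub
  -- key per-vertex count
  have key : ∀ v : Fin n,
      (¬ ∃ e₁ ∈ F, ∃ e₂ ∈ F, e₁ ≠ e₂ ∧ Friendly G v e₁ ∧ Friendly G v e₂) →
      (G.neighborFinset v ∩ DF).card ≤ DF.card - 2 * γ + (γ + 1) := by
    intro v hv
    have hsub : G.neighborFinset v ∩ DF ⊆ (DF \ MF) ∪ (G.neighborFinset v ∩ MF) := by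
      intro x hx
      rw [Finset.mem_inter] at hx
      by_cases hxM : x ∈ MF
      · exact Finset.mem_union_right _ (Finset.mem_inter.2 ⟨hx.1, hxM⟩)
      · exact Finset.mem_union_left _ (Finset.mem_sdiff.2 ⟨hx.2, hxM⟩)
    have h1 : (DF \ MF).card = DF.card - 2 * γ := by
      rw [Finset.card_sdiff_of_subset hMFsub, hMFcard]
    -- bound on N ∩ MF
    have hdistrib : G.neighborFinset v ∩ MF = F.biUnion (fun e => G.neighborFinset v ∩ efs e) := by
      rw [hMF]
      ext x
      simp only [Finset.mem_inter, Finset.mem_biUnion]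
      tauto
    have hterm2 : ∀ e ∈ F, (G.neighborFinset v ∩ efs e).card ≤ 2 := by
      intro e he
      calc (G.neighborFinset v ∩ efs e).card ≤ (efs e).card :=
            Finset.card_le_card (Finset.inter_subset_right)
        _ = 2 := hefscard e he
    have hterm1 : ∀ e ∈ F, ¬ Friendly G v e → (G.neighborFinset v ∩ efs e).card ≤ 1 := by
      intro e he hf
      by_contra h
      push_neg at h
      have h2 : 2 ≤ (G.neighborFinset v ∩ efs e).card := h
      have heq : G.neighborFinset v ∩ efs e = efs e := by
        apply Finset.eq_of_subset_of_card_le Finset.inter_subset_right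
        rw [hefscard e he]; exact h2
      apply hf
      intro x hx
      have : x ∈ G.neighborFinset v ∩ efs e := by rw [heq]; exact (hefsmem e x).2 hx
      have := (Finset.mem_inter.1 this).1
      exact (SimpleGraph.mem_neighborFinset G v x).1 this
    have hsum : (∑ e ∈ F, (G.neighborFinset v ∩ efs e).card) ≤ γ + 1 := by
      by_cases hex : ∃ e₀ ∈ F, Friendly G v e₀
      · obtain ⟨e₀, he₀, hfr₀⟩ := hex
        have h1γ : 1 ≤ γ := by rw [hγ]; exact Finset.card_pos.2 ⟨e₀, he₀⟩
        have hsplit : (∑ e ∈ F, (G.neighborFinset v ∩ efs e).card) =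
            (G.neighborFinset v ∩ efs e₀).card +
              ∑ e ∈ F.erase e₀, (G.neighborFinset v ∩ efs e).card :=
          (Finset.add_sum_erase F _ he₀).symm
        have herase : (∑ e ∈ F.erase e₀, (G.neighborFinset v ∩ efs e).card) ≤ γ - 1 := by
          calc (∑ e ∈ F.erase e₀, (G.neighborFinset v ∩ efs e).card)
              ≤ ∑ _e ∈ F.erase e₀, 1 := by
                apply Finset.sum_le_sum
                intro e he
                have heF : e ∈ F := Finset.mem_of_mem_erase he
                have hne : e ≠ e₀ := Finset.ne_of_mem_erase he
                apply hterm1 e heF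
                intro hfr
                exact hv ⟨e, heF, e₀, he₀, hne, hfr, hfr₀⟩
            _ = (F.erase e₀).card := by simp
            _ = γ - 1 := by rw [Finset.card_erase_of_mem he₀, hγ]
        rw [hsplit]
        have := hterm2 e₀ he₀
        omega
      · push_neg at hex
        calc (∑ e ∈ F, (G.neighborFinset v ∩ efs e).card) ≤ ∑ _e ∈ F, 1 := by
              apply Finset.sum_le_sum
              intro e he
              exact hterm1 e he (hex e he)
          _ = γ := by simp [hγ]
          _ ≤ γ + 1 := Nat.le_succ γ
    have h2 : (G.neighborFinset v ∩ MF).card ≤ γ + 1 := by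
      rw [hdistrib]
      exact le_trans (Finset.card_biUnion_le) hsum
    calc (G.neighborFinset v ∩ DF).card ≤ ((DF \ MF) ∪ (G.neighborFinset v ∩ MF)).card :=
          Finset.card_le_card hsub
      _ ≤ (DF \ MF).card + (G.neighborFinset v ∩ MF).card := Finset.card_union_le _ _
      _ ≤ (DF.card - 2 * γ) + (γ + 1) := by rw [h1]; omega
  -- identify the set with the finset
  have hNDeq : ∀ v : Fin n, (G.neighborSet v ∩ Dset) = ↑(G.neighborFinset v ∩ DF) := by
    intro v
    ext x
    simp [hDFmem x, SimpleGraph.mem_neighborFinset, SimpleGraph.mem_neighborSet]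
  have hNDcard : ∀ v : Fin n, (G.neighborSet v ∩ Dset).ncard = (G.neighborFinset v ∩ DF).card := by
    intro v; rw [hNDeq v, Set.ncard_coe_finset]
  -- part 1
  have part1 : ∀ i : Fin (t + 1), i ∉ A → ∀ j : Fin 3,
      ((G.neighborSet (f i j) ∩ Dset).ncard : ℤ) ≤ (n : ℤ) - 3 * (t + 1) - γ + 1 := by
    intro i hi j
    have hv : ¬ ∃ e₁ ∈ F, ∃ e₂ ∈ F, e₁ ≠ e₂ ∧ Friendly G (f i j) e₁ ∧ Friendly G (f i j) e₂ := by
      intro ⟨e₁, he₁, e₂, he₂, hne, hf1, hf2⟩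
      exact hi ((hA i).2 ⟨j, e₁, he₁, e₂, he₂, hne, hf1, hf2⟩)
    have := key (f i j) hv
    rw [hNDcard]
    have hcast : ((G.neighborFinset (f i j) ∩ DF).card : ℤ) ≤
        (DF.card : ℤ) - 2 * γ + (γ + 1) := by
      have := key (f i j) hv
      omega
    have : (DF.card : ℤ) = (n : ℤ) - 3 * (t + 1) := by
      rw [hDFcard]; omega
    omega
  refine ⟨part1, ?_⟩
  -- part 2
  set ES : Set (Sym2 (Fin n)) := {e | e ∈ G.edgeSet ∧ ∃ u v : Fin n, e = s(u, v) ∧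
      (∃ i : Fin (t + 1), i ∉ A ∧ ∃ j, f i j = u) ∧ v ∈ Dset} with hES
  set T : Finset (Sym2 (Fin n)) := (Aᶜ ×ˢ (Finset.univ : Finset (Fin 3))).biUnion
      (fun p => (G.neighborFinset (f p.1 p.2) ∩ DF).image (fun v => s(f p.1 p.2, v))) with hT
  have hsubT : ES ⊆ ↑T := by
    rintro e ⟨heE, u, v, rfl, ⟨i, hi, j, rfl⟩, hvD⟩
    rw [Finset.mem_coe, hT, Finset.mem_biUnion]
    refine ⟨(i, j), ?_, ?_⟩
    · rw [Finset.mem_product]; exact ⟨Finset.mem_compl.2 hi, Finset.mem_univ j⟩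
    · rw [Finset.mem_image]
      refine ⟨v, ?_, rfl⟩
      rw [Finset.mem_inter]
      exact ⟨(SimpleGraph.mem_neighborFinset G _ v).2 (G.mem_edgeSet.1 heE),
        (hDFmem v).2 hvD⟩
  have hEScard : ES.ncard ≤ T.card := by
    calc ES.ncard ≤ (↑T : Set (Sym2 (Fin n))).ncard :=
          Set.ncard_le_ncard hsubT (Set.toFinite _)
      _ = T.card := Set.ncard_coe_finset T
  have hTcard : T.card ≤ (Aᶜ.card * 3) * (DF.card - 2 * γ + (γ + 1)) := by
    calc T.card ≤ ∑ p ∈ Aᶜ ×ˢ (Finset.univ : Finset (Fin 3)),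
          ((G.neighborFinset (f p.1 p.2) ∩ DF).image (fun v => s(f p.1 p.2, v))).card :=
          Finset.card_biUnion_le
      _ ≤ ∑ p ∈ Aᶜ ×ˢ (Finset.univ : Finset (Fin 3)), (DF.card - 2 * γ + (γ + 1)) := by
          apply Finset.sum_le_sum
          rintro ⟨i, j⟩ hp
          rw [Finset.mem_product] at hp
          have hi : i ∉ A := Finset.mem_compl.1 hp.1
          have hv : ¬ ∃ e₁ ∈ F, ∃ e₂ ∈ F, e₁ ≠ e₂ ∧ Friendly G (f i j) e₁ ∧
              Friendly G (f i j) e₂ := by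
            intro ⟨e₁, he₁, e₂, he₂, hne, hf1, hf2⟩
            exact hi ((hA i).2 ⟨j, e₁, he₁, e₂, he₂, hne, hf1, hf2⟩)
          calc ((G.neighborFinset (f i j) ∩ DF).image (fun v => s(f i j, v))).card
              ≤ (G.neighborFinset (f i j) ∩ DF).card := Finset.card_image_le
            _ ≤ DF.card - 2 * γ + (γ + 1) := key (f i j) hv
      _ = (Aᶜ.card * 3) * (DF.card - 2 * γ + (γ + 1)) := by
          rw [Finset.sum_const, Finset.card_product, Finset.card_univ, Fintype.card_fin]
          simp [Nat.smul_one_eq_cast]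
  have hK : ((DF.card - 2 * γ + (γ + 1) : ℕ) : ℤ) = (n : ℤ) - 3 * (t + 1) - γ + 1 := by
    have : (DF.card : ℤ) = (n : ℤ) - 3 * (t + 1) := by rw [hDFcard]; omega
    omega
  have hfinal : (ES.ncard : ℤ) ≤ (Aᶜ.card * 3 : ℕ) * ((n : ℤ) - 3 * (t + 1) - γ + 1) := by
    rw [← hK]
    have : (ES.ncard : ℤ) ≤ ((Aᶜ.card * 3) * (DF.card - 2 * γ + (γ + 1)) : ℕ) := by
      exact_mod_cast le_trans hEScard hTcard
    push_cast at this ⊢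
    linarith
  calc (ES.ncard : ℤ) ≤ (Aᶜ.card * 3 : ℕ) * ((n : ℤ) - 3 * (t + 1) - γ + 1) := hfinal
    _ = 3 * Aᶜ.card * ((n : ℤ) - 3 * (t + 1) - γ + 1) := by push_cast; ring
end
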